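/- arXiv:1909.12585 — 4 statements merged into one kernel-verified Lean document; each statement's English description precedes it below -/
import Mathlib

section
/- Let F be an invertible 3×3 real matrix with polar decomposition F = Q₀U₀ (Q₀ ∈ SO(3), U₀ symmetric positive definite). If FᵀF e₃ = e₃ and FᵀF preserves span{e₁,e₂}, then Q₀ e₃ = F e₃. -/
/-!
Since `Qᵀ Q = 1`, we have `Fᵀ F = U²`, so `U² e₃ = e₃`. Then `(U + 1)(U e₃ - e₃) = 0`, and `U + 1`
is positive definite, hence invertible; so `U e₃ = e₃` and `Q e₃ = Q U e₃ = F e₃`.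
-/

open Matrix

namespace Matrix

variable {n : Type*} [Fintype n] [DecidableEq n]

theorem transpose_mul_mul_self_of_orthogonal_of_isSymm {R : Type*} [CommRing R]
    {Q U : Matrix n n R} (hQ : Qᵀ * Q = 1) (hU : U.IsSymm) :
    (Q * U)ᵀ * (Q * U) = U * U := by
  rw [transpose_mul, Matrix.mul_assoc, ← Matrix.mul_assoc Qᵀ, hQ, Matrix.one_mul, hU.eq]

theorem PosDef.mulVec_eq_of_mul_self_mulVec_eq {K : Type*} [Field K] [PartialOrder K]
    [StarRing K] [StarOrderedRing K] {U : Matrix n n K} (hU : U.PosDef) {v : n → K}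
    (hv : (U * U) *ᵥ v = v) : U *ᵥ v = v := by
  have hker : (U + 1) *ᵥ (U *ᵥ v - v) = 0 := by
    rw [add_mulVec, mulVec_sub, mulVec_sub, mulVec_mulVec, hv, one_mulVec, one_mulVec,
      sub_add_sub_cancel, sub_self]
  have hinj : Function.Injective (U + 1).mulVec :=
    mulVec_injective_iff_isUnit.mpr (hU.add_posSemidef PosSemidef.one).isUnit
  exact sub_eq_zero.mp (hinj (hker.trans (mulVec_zero _).symm))

end Matrix

theorem stmt_6_general (F Q U : Matrix (Fin 3) (Fin 3) ℝ)
    (hpolar : F = Q * U)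
    (hQ : Qᵀ * Q = 1) (hU : U.PosDef)
    (he3 : (Fᵀ * F).mulVec (Pi.single 2 1) = Pi.single 2 1) :
    Q.mulVec (Pi.single 2 1) = F.mulVec (Pi.single 2 1) := by
  subst hpolar
  have hUsymm : U.IsSymm := isHermitian_iff_isSymm.mp hU.isHermitian
  rw [transpose_mul_mul_self_of_orthogonal_of_isSymm hQ hUsymm] at he3
  rw [← mulVec_mulVec, hU.mulVec_eq_of_mul_self_mulVec_eq he3]

/-- Let `F` be invertible with polar decomposition `F = Q₀ U₀` (`Q₀ ∈ SO(3)`,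
`U₀` symmetric positive definite). If `FᵀF e₃ = e₃` and `FᵀF` preserves
`span{e₁,e₂}`, then `Q₀ e₃ = F e₃`. -/
theorem stmt_6 (F Q U : Matrix (Fin 3) (Fin 3) ℝ)
    (hF : IsUnit F) (hpolar : F = Q * U)
    (hQ : Qᵀ * Q = 1) (hdetQ : Q.det = 1) (hU : U.PosDef)
    (he3 : (Fᵀ * F).mulVec (Pi.single 2 1) = Pi.single 2 1)
    (hpres : ∀ i : Fin 3, i ≠ 2 → (Fᵀ * F) i 2 = 0 ∧ (Fᵀ * F) 2 i = 0) :
    Q.mulVec (Pi.single 2 1) = F.mulVec (Pi.single 2 1) :=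
  stmt_6_general F Q U hpolar hQ hU he3
end

section
/- With the hypotheses of the previous shifting identity and λ + 2μ ≠ 0, define W_mixt(S,T) := W_mp3(S,T) − (λ²/(2(λ+2μ)))(tr S)(tr T). Then for every β ∈ ℝ: W_mp3(S − (λ/(λ+2μ))(tr S) n⊗n, T + β n⊗n) = W_mixt(S,T). -/
open Matrix

/-- Frobenius inner product on 3×3 real matrices. -/
noncomputable def finner (A B : Matrix (Fin 3) (Fin 3) ℝ) : ℝ := Matrix.trace (Aᵀ * B)

noncomputable def symPart (X : Matrix (Fin 3) (Fin 3) ℝ) : Matrix (Fin 3) (Fin 3) ℝ :=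
  (1/2 : ℝ) • (X + Xᵀ)

noncomputable def skewPart (X : Matrix (Fin 3) (Fin 3) ℝ) : Matrix (Fin 3) (Fin 3) ℝ :=
  (1/2 : ℝ) • (X - Xᵀ)

/-- `W_mp3(S,T) = μ⟨sym S, sym T⟩ + μ_c⟨skew S, skew T⟩ + (λ/2)(tr S)(tr T)`. -/
noncomputable def Wmp3 (lam mu muc : ℝ) (S T : Matrix (Fin 3) (Fin 3) ℝ) : ℝ :=
  mu * finner (symPart S) (symPart T) + muc * finner (skewPart S) (skewPart T)
    + lam/2 * (Matrix.trace S * Matrix.trace T)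

/-- `W_mixt(S,T) := W_mp3(S,T) − (λ²/(2(λ+2μ)))(tr S)(tr T)`. -/
noncomputable def Wmixt (lam mu muc : ℝ) (S T : Matrix (Fin 3) (Fin 3) ℝ) : ℝ :=
  Wmp3 lam mu muc S T - lam^2 / (2*(lam + 2*mu)) * (Matrix.trace S * Matrix.trace T)

/-! The dyad `n ⊗ n` is symmetric with `⟨n ⊗ n, n ⊗ n⟩ = tr (n ⊗ n) = 1`, so shifting `S` and `T`
along it leaves the skew parts alone and moves only the traces and the `n ⊗ n`-components of the
symmetric parts, which vanish by hypothesis. The shifted energy differs from `W_mp3(S,T)` by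
`-μ a β + (λ/2)(β tr S - a tr T - a β)`; for `a = λ tr S/(λ+2μ)` the `β`-terms cancel and what is
left is exactly the correction `-(λ²/(2(λ+2μ))) tr S tr T`. -/

lemma finner_comm (A B : Matrix (Fin 3) (Fin 3) ℝ) : finner A B = finner B A := by
  rw [finner, finner, ← trace_transpose, transpose_mul, transpose_transpose, trace_mul_comm]

lemma finner_sub_smul_add_smul (A B P : Matrix (Fin 3) (Fin 3) ℝ) (a b : ℝ) :
    finner (A - a • P) (B + b • P)
      = finner A B + b * finner A P - a * finner P B - a * b * finner P P := by
  simp only [finner, transpose_sub, transpose_smul, sub_mul, mul_add, smul_mul, Matrix.mul_smul,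
    trace_sub, trace_add, trace_smul, smul_eq_mul]
  ring

lemma finner_vecMulVec_self (n : Fin 3 → ℝ) :
    finner (vecMulVec n n) (vecMulVec n n) = (n ⬝ᵥ n) ^ 2 := by
  rw [finner, transpose_vecMulVec, vecMulVec_mul_vecMulVec, vecMulVec_smul, trace_smul,
    trace_vecMulVec, smul_eq_mul, sq]

lemma isSymm_vecMulVec_self {ι R : Type*} [CommMagma R] (v : ι → R) :
    (vecMulVec v v).IsSymm :=
  transpose_vecMulVec v v

section SymmetricShift

variable {X A : Matrix (Fin 3) (Fin 3) ℝ}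

lemma symPart_add_of_isSymm (hA : A.IsSymm) : symPart (X + A) = symPart X + A := by
  rw [symPart, symPart, transpose_add, hA.eq]
  module

lemma skewPart_add_of_isSymm (hA : A.IsSymm) : skewPart (X + A) = skewPart X := by
  rw [skewPart, skewPart, transpose_add, hA.eq, add_sub_add_right_eq_sub]

lemma symPart_sub_of_isSymm (hA : A.IsSymm) : symPart (X - A) = symPart X - A := by
  rw [sub_eq_add_neg, symPart_add_of_isSymm hA.neg, ← sub_eq_add_neg]

lemma skewPart_sub_of_isSymm (hA : A.IsSymm) : skewPart (X - A) = skewPart X := by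
  rw [sub_eq_add_neg, skewPart_add_of_isSymm hA.neg]

end SymmetricShift

theorem Wmp3_sub_smul_add_smul_vecMulVec (lam mu muc : ℝ) {n : Fin 3 → ℝ} (hn : n ⬝ᵥ n = 1)
    {S T : Matrix (Fin 3) (Fin 3) ℝ}
    (hS : finner (symPart S) (vecMulVec n n) = 0)
    (hT : finner (symPart T) (vecMulVec n n) = 0) (a b : ℝ) :
    Wmp3 lam mu muc (S - a • vecMulVec n n) (T + b • vecMulVec n n)
      = Wmp3 lam mu muc S T - mu * a * b
          + lam / 2 * ((trace S - a) * (trace T + b) - trace S * trace T) := by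
  have hP := isSymm_vecMulVec_self n
  have hPa : (a • vecMulVec n n).IsSymm := hP.smul a
  have hPb : (b • vecMulVec n n).IsSymm := hP.smul b
  have hT' : finner (vecMulVec n n) (symPart T) = 0 := by rw [finner_comm, hT]
  rw [Wmp3, Wmp3, symPart_sub_of_isSymm hPa, symPart_add_of_isSymm hPb, skewPart_sub_of_isSymm hPa,
    skewPart_add_of_isSymm hPb, finner_sub_smul_add_smul, hS, hT',
    finner_vecMulVec_self, hn, trace_sub, trace_add, trace_smul, trace_smul, trace_vecMulVec, hn]
  simp only [smul_eq_mul]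
  ring

/-- For a unit vector `n`, matrices `S, T` with `⟨sym S, n⊗n⟩ = ⟨sym T, n⊗n⟩ = 0`, and
`λ + 2μ ≠ 0`, for every `β`:
`W_mp3(S − (λ/(λ+2μ))(tr S) n⊗n, T + β n⊗n) = W_mixt(S,T)`. -/
theorem stmt_10 (lam mu muc : ℝ) (hlm : lam + 2*mu ≠ 0)
    (n : Fin 3 → ℝ) (hn : n ⬝ᵥ n = 1)
    (S T : Matrix (Fin 3) (Fin 3) ℝ)
    (hS : finner (symPart S) (vecMulVec n n) = 0)
    (hT : finner (symPart T) (vecMulVec n n) = 0) :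
    ∀ β : ℝ,
      Wmp3 lam mu muc (S - (lam/(lam + 2*mu) * Matrix.trace S) • vecMulVec n n)
          (T + β • vecMulVec n n)
        = Wmixt lam mu muc S T := by
  intro β
  have hcancel : lam / (lam + 2*mu) * (lam + 2*mu) = lam := div_mul_cancel₀ lam hlm
  have hcorrection : lam ^ 2 / (2 * (lam + 2*mu)) = lam / 2 * (lam / (lam + 2*mu)) := by
    rw [sq, mul_div_mul_comm]
  rw [Wmp3_sub_smul_add_smul_vecMulVec lam mu muc hn hS hT, Wmixt, hcorrection]
  linear_combination (-(trace S * β) / 2) * hcancel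
end

section
/- Suppose S₂(E) = 2μ·E + 2(μ_c − μ)·skew E + λ(tr E)I₃ and E = Eᵉ + (ϱ_m − 1) n⊗n, where Eᵉ satisfies Eᵉ n = 0 and nᵀEᵉ relevant components vanish so that nᵀ(sym Eᵉ)n = 0 and nᵀ(skew Eᵉ)n = 0. Then the condition nᵀ S₂(E) n = 0 is equivalent to ϱ_m = 1 − (λ/(λ+2μ)) tr Eᵉ (assuming λ + 2μ ≠ 0). -/
open Matrix

lemma aux_vecMulVec_mulVec (u v w : Fin 3 → ℝ) :
    (vecMulVec u v).mulVec w = (v ⬝ᵥ w) • u := by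
  ext i
  simp only [vecMulVec, mulVec, dotProduct, Pi.smul_apply, smul_eq_mul, of_apply]
  rw [Finset.sum_mul]
  exact Finset.sum_congr rfl (fun j _ => by ring)

lemma transpose_vecMulVec (u v : Fin 3 → ℝ) : (vecMulVec u v)ᵀ = vecMulVec v u := by
  ext i j; simp [vecMulVec, mul_comm]

lemma aux_trace_vecMulVec (u v : Fin 3 → ℝ) :
    Matrix.trace (vecMulVec u v) = u ⬝ᵥ v := by
  simp [Matrix.trace, vecMulVec, dotProduct, Matrix.diag]

/-- Plane-stress condition determines the thickness stretch:
with `S₂(E) = 2μ E + 2(μ_c − μ) skew E + λ (tr E) I₃` and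
`E = Eᵉ + (ϱ_m − 1) n⊗n`, where `Eᵉ n = 0` and `nᵀ(sym Eᵉ)n = nᵀ(skew Eᵉ)n = 0`,
the condition `nᵀ S₂(E) n = 0` is equivalent to
`ϱ_m = 1 − (λ/(λ+2μ)) tr Eᵉ` (for `λ + 2μ ≠ 0`). -/
theorem stmt_18 (lam mu muc : ℝ) (hmu : 0 < mu) (hlm : lam + 2*mu ≠ 0)
    (n : Fin 3 → ℝ) (hn : n ⬝ᵥ n = 1)
    (Ee : Matrix (Fin 3) (Fin 3) ℝ)
    (hEn : Ee.mulVec n = 0)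
    (hsym : n ⬝ᵥ (((1/2 : ℝ) • (Ee + Eeᵀ)).mulVec n) = 0)
    (hskew : n ⬝ᵥ (((1/2 : ℝ) • (Ee - Eeᵀ)).mulVec n) = 0)
    (rm : ℝ)
    (E : Matrix (Fin 3) (Fin 3) ℝ) (hE : E = Ee + (rm - 1) • vecMulVec n n)
    (S2 : Matrix (Fin 3) (Fin 3) ℝ)
    (hS2 : S2 = (2*mu) • E + (2*(muc - mu)) • ((1/2 : ℝ) • (E - Eᵀ))
        + (lam * Matrix.trace E) • (1 : Matrix (Fin 3) (Fin 3) ℝ)) :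
    n ⬝ᵥ S2.mulVec n = 0 ↔ rm = 1 - lam/(lam + 2*mu) * Matrix.trace Ee := by
  have hEen : n ⬝ᵥ Ee.mulVec n = 0 := by rw [hEn]; simp
  have hEetn : n ⬝ᵥ Eeᵀ.mulVec n = 0 := by
    have h := hsym
    simp only [smul_mulVec, add_mulVec, dotProduct_smul, dotProduct_add, hEen] at h
    simp only [smul_eq_mul] at h
    linarith
  have key : n ⬝ᵥ S2.mulVec n = (lam + 2*mu) * (rm - 1) + lam * Matrix.trace Ee := by
    subst hS2 hE
    simp only [smul_mulVec, add_mulVec, sub_mulVec, dotProduct_smul, dotProduct_add,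
      dotProduct_sub, one_mulVec, aux_vecMulVec_mulVec, Matrix.trace_add, Matrix.trace_smul,
      aux_trace_vecMulVec, transpose_add, transpose_smul, transpose_vecMulVec, hEen, hEetn, hn, smul_eq_mul]
    ring
  rw [key]
  constructor
  · intro h
    field_simp
    ring_nf
    ring_nf at h
    nlinarith [h]
  · intro h
    subst h
    field_simp
    ring
end

section
/- Let Qₑ ∈ SO(3) with Qₑ n₀ = d₃ and let Kᵉ = axl(Qₑᵀ Qₑ,_α) ⊗ a^α be the shell bending–curvature tensor, c the planar alternator, b = −Grad_s n₀, a the planar identity. Then Qₑᵀ Grad_s d₃ = c Kᵉ − b, where Grad_s f = f,_α ⊗ a^α. -/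
/-!
Differentiating `Qₑᵀ Qₑ = 1` shows that `Qₑᵀ Qₑ,_α` is skew, so it acts on `n₀` as the cross
product with its axial vector `kα`. The product rule gives `Qₑᵀ d₃,_α = Qₑᵀ Qₑ,_α n₀ + n₀,_α`.
Since `Q₀` is a rotation, `n₀ = d₁⁰ × d₂⁰`, and the triple-product expansion turns
`kα × (d₁⁰ × d₂⁰)` into `c kα`; tensoring with `a^α` and summing gives `c Kᵉ − b`.
-/

open Matrix

attribute [local instance] Matrix.normedAddCommGroup Matrix.normedSpace

/-- The axial vector of a (skew-symmetric) 3×3 real matrix. -/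
noncomputable def axl (A : Matrix (Fin 3) (Fin 3) ℝ) : Fin 3 → ℝ :=
  ![A 2 1, A 0 2, A 1 0]

theorem ContinuousLinearMap.fderiv_of_bilinear_apply {E F G H : Type*}
    [NormedAddCommGroup E] [NormedSpace ℝ E] [NormedAddCommGroup F] [NormedSpace ℝ F]
    [NormedAddCommGroup G] [NormedSpace ℝ G] [NormedAddCommGroup H] [NormedSpace ℝ H]
    (B : E →L[ℝ] F →L[ℝ] G) {f : H → E} {g : H → F} {x : H}
    (hf : DifferentiableAt ℝ f x) (hg : DifferentiableAt ℝ g x) (v : H) :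
    fderiv ℝ (fun y => B (f y) (g y)) x v =
      B (f x) (fderiv ℝ g x v) + B (fderiv ℝ f x v) (g x) := by
  rw [B.fderiv_of_bilinear hf hg]
  rfl

section MatrixCalculus

variable {l m n : Type*} [Fintype l] [Fintype m] [Fintype n]
  {H : Type*} [NormedAddCommGroup H] [NormedSpace ℝ H] {x : H}

noncomputable def Matrix.mulVecCLM : Matrix m n ℝ →L[ℝ] (n → ℝ) →L[ℝ] (m → ℝ) :=
  LinearMap.toContinuousLinearMap <| LinearMap.toContinuousLinearMap.toLinearMap ∘ₗ
    LinearMap.mk₂ ℝ (fun A v => A *ᵥ v) add_mulVec (fun c A v => smul_mulVec c A v)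
      mulVec_add (fun c A v => mulVec_smul A c v)

noncomputable def Matrix.transposeMulCLM :
    Matrix l m ℝ →L[ℝ] Matrix l n ℝ →L[ℝ] Matrix m n ℝ :=
  LinearMap.toContinuousLinearMap <| LinearMap.toContinuousLinearMap.toLinearMap ∘ₗ
    LinearMap.mk₂ ℝ (fun A B => Aᵀ * B) (fun A A' B => by rw [transpose_add, Matrix.add_mul])
      (fun c A B => by rw [transpose_smul, Matrix.smul_mul]) (fun A B B' => Matrix.mul_add _ _ _)
      (fun c A B => Matrix.mul_smul _ c _)

theorem fderiv_mulVec_apply {Q : H → Matrix m n ℝ} {u : H → n → ℝ}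
    (hQ : DifferentiableAt ℝ Q x) (hu : DifferentiableAt ℝ u x) (v : H) :
    fderiv ℝ (fun y => Q y *ᵥ u y) x v = Q x *ᵥ fderiv ℝ u x v + fderiv ℝ Q x v *ᵥ u x :=
  Matrix.mulVecCLM.fderiv_of_bilinear_apply hQ hu v

theorem fderiv_transpose_mul_apply {P : H → Matrix l m ℝ} {Q : H → Matrix l n ℝ}
    (hP : DifferentiableAt ℝ P x) (hQ : DifferentiableAt ℝ Q x) (v : H) :
    fderiv ℝ (fun y => (P y)ᵀ * Q y) x v =
      (P x)ᵀ * fderiv ℝ Q x v + (fderiv ℝ P x v)ᵀ * Q x := by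
  exact Matrix.transposeMulCLM.fderiv_of_bilinear_apply hP hQ v

theorem transpose_mul_fderiv_skew [DecidableEq n] {Q : H → Matrix n n ℝ}
    (hQ : (fun y => (Q y)ᵀ * Q y) =ᶠ[nhds x] fun _ => 1) (hd : DifferentiableAt ℝ Q x)
    (v : H) :
    ((Q x)ᵀ * fderiv ℝ Q x v)ᵀ = -((Q x)ᵀ * fderiv ℝ Q x v) := by
  have h0 : (Q x)ᵀ * fderiv ℝ Q x v + (fderiv ℝ Q x v)ᵀ * Q x = 0 := by
    rw [← fderiv_transpose_mul_apply hd hd, hQ.fderiv_eq, fderiv_const_apply]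
    rfl
  rw [transpose_mul, transpose_transpose, eq_neg_of_add_eq_zero_right h0]

end MatrixCalculus

section CrossProduct

variable {R : Type*} [CommRing R]

theorem Matrix.adjugate_eq_transpose {n : Type*} [Fintype n] [DecidableEq n] {Q : Matrix n n R}
    (hQ : Qᵀ * Q = 1) (hdet : Q.det = 1) : Q.adjugate = Qᵀ :=
  calc Q.adjugate = Qᵀ * Q * Q.adjugate := by rw [hQ, one_mul]
    _ = Qᵀ := by rw [mul_assoc, mul_adjugate, hdet, one_smul, mul_one]

theorem cross_mulVec_mulVec (M : Matrix (Fin 3) (Fin 3) R) (u v : Fin 3 → R) :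
    (M *ᵥ u) ⨯₃ (M *ᵥ v) = M.adjugateᵀ *ᵥ (u ⨯₃ v) := by
  ext i
  fin_cases i <;>
  · simp only [Fin.zero_eta, Fin.mk_one, Fin.reduceFinMk, Fin.isValue, cross_apply, mulVec,
      dotProduct, Fin.sum_univ_three, adjugate_fin_three, transpose_apply, of_apply, cons_val',
      cons_val_fin_one, cons_val_zero, cons_val_one, cons_val]
    ring

theorem cross_mulVec_mulVec_of_det_eq_one {Q : Matrix (Fin 3) (Fin 3) R}
    (hQ : Qᵀ * Q = 1) (hdet : Q.det = 1) (u v : Fin 3 → R) :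
    (Q *ᵥ u) ⨯₃ (Q *ᵥ v) = Q *ᵥ (u ⨯₃ v) := by
  rw [cross_mulVec_mulVec, adjugate_eq_transpose hQ hdet, transpose_transpose]

theorem single_zero_cross_single_one :
    Pi.single 0 1 ⨯₃ Pi.single 1 1 = (Pi.single 2 1 : Fin 3 → R) := by
  ext i
  fin_cases i <;> simp [cross_apply]

theorem vecMulVec_sub_vecMulVec_mulVec (u v w : Fin 3 → R) :
    (vecMulVec u v - vecMulVec v u) *ᵥ w = w ⨯₃ (u ⨯₃ v) := by
  rw [sub_mulVec, vecMulVec_mulVec, vecMulVec_mulVec, cross_cross_eq_smul_sub_smul',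
    op_smul_eq_smul, op_smul_eq_smul, dotProduct_comm w, dotProduct_comm u]

theorem mulVec_eq_axl_cross {A : Matrix (Fin 3) (Fin 3) ℝ} (hA : Aᵀ = -A) (v : Fin 3 → ℝ) :
    A *ᵥ v = axl A ⨯₃ v := by
  have h i j : A j i = -A i j := congrFun (congrFun hA i) j
  ext i
  fin_cases i <;>
    simp only [Fin.zero_eta, Fin.mk_one, Fin.reduceFinMk, Fin.isValue, mulVec, dotProduct,
      Fin.sum_univ_three, axl, cross_apply, cons_val_one, cons_val_zero, cons_val]
  · linear_combination (v 0 / 2) * h 0 0 + v 1 * h 1 0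
  · linear_combination (v 1 / 2) * h 1 1 + v 2 * h 2 1
  · linear_combination v 0 * h 0 2 + (v 2 / 2) * h 2 2

end CrossProduct

theorem stmt_19_general
    (n0 : (Fin 2 → ℝ) → (Fin 3 → ℝ))
    (Qe : (Fin 2 → ℝ) → Matrix (Fin 3) (Fin 3) ℝ)
    (Q0 : Matrix (Fin 3) (Fin 3) ℝ)
    (x : Fin 2 → ℝ)
    (adual : Fin 2 → (Fin 3 → ℝ))
    (hQe : ∀ y, (Qe y)ᵀ * Qe y = 1 ∧ (Qe y).det = 1)
    (hQ0 : Q0ᵀ * Q0 = 1) (hQ0det : Q0.det = 1)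
    (hQ0n : Q0.mulVec (Pi.single 2 1) = n0 x)
    (hdn : DifferentiableAt ℝ n0 x)
    (hdQ : DifferentiableAt ℝ Qe x)
    (d10 d20 : Fin 3 → ℝ)
    (hd10 : d10 = Q0.mulVec (Pi.single 0 1))
    (hd20 : d20 = Q0.mulVec (Pi.single 1 1))
    (c : Matrix (Fin 3) (Fin 3) ℝ) (hc : c = vecMulVec d10 d20 - vecMulVec d20 d10)
    (b : Matrix (Fin 3) (Fin 3) ℝ)
    (hbdef : b = -∑ α : Fin 2, vecMulVec (fderiv ℝ n0 x (Pi.single α 1)) (adual α))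
    (Ke : Matrix (Fin 3) (Fin 3) ℝ)
    (hKe : Ke = ∑ α : Fin 2,
        vecMulVec (axl ((Qe x)ᵀ * fderiv ℝ Qe x (Pi.single α 1))) (adual α))
    (d3f : (Fin 2 → ℝ) → (Fin 3 → ℝ)) (hd3f : d3f = fun y => (Qe y).mulVec (n0 y))
    (GradS : Matrix (Fin 3) (Fin 3) ℝ)
    (hGradS : GradS = ∑ α : Fin 2,
        vecMulVec (fderiv ℝ d3f x (Pi.single α 1)) (adual α)) :
    (Qe x)ᵀ * GradS = c * Ke - b := by
  have hn0 : n0 x = d10 ⨯₃ d20 := by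
    rw [hd10, hd20, cross_mulVec_mulVec_of_det_eq_one hQ0 hQ0det, single_zero_cross_single_one,
      hQ0n]
  have hA (v : Fin 2 → ℝ) :
      ((Qe x)ᵀ * fderiv ℝ Qe x v) *ᵥ n0 x = c *ᵥ axl ((Qe x)ᵀ * fderiv ℝ Qe x v) := by
    rw [mulVec_eq_axl_cross (transpose_mul_fderiv_skew
      (Filter.Eventually.of_forall fun y => (hQe y).1) hdQ v), hn0, hc,
      vecMulVec_sub_vecMulVec_mulVec]
  subst hbdef hKe hd3f hGradS
  rw [Finset.mul_sum, Finset.mul_sum, sub_neg_eq_add, ← Finset.sum_add_distrib]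
  refine Finset.sum_congr rfl fun α _ => ?_
  rw [mul_vecMulVec, mul_vecMulVec, fderiv_mulVec_apply hdQ hdn, mulVec_add, mulVec_mulVec,
    mulVec_mulVec, (hQe x).1, one_mulVec, hA, add_vecMulVec, add_comm]

/-- With `Qₑ ∈ SO(3)`, `d₃ = Qₑ n₀`, bending–curvature tensor
`Kᵉ = axl(Qₑᵀ Qₑ,_α) ⊗ a^α`, alternator `c = d₁⁰⊗d₂⁰ − d₂⁰⊗d₁⁰`,
second fundamental tensor `b = −n₀,_α ⊗ a^α` and surface gradient
`Grad_s f = f,_α ⊗ a^α`, one has `Qₑᵀ Grad_s d₃ = c Kᵉ − b`. -/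
theorem stmt_19
    (n0 : (Fin 2 → ℝ) → (Fin 3 → ℝ))
    (Qe : (Fin 2 → ℝ) → Matrix (Fin 3) (Fin 3) ℝ)
    (Q0 : Matrix (Fin 3) (Fin 3) ℝ)
    (x : Fin 2 → ℝ)
    (adual : Fin 2 → (Fin 3 → ℝ))
    (hQe : ∀ y, (Qe y)ᵀ * Qe y = 1 ∧ (Qe y).det = 1)
    (hQ0 : Q0ᵀ * Q0 = 1) (hQ0det : Q0.det = 1)
    (hQ0n : Q0.mulVec (Pi.single 2 1) = n0 x)
    (hn0unit : ∀ y, n0 y ⬝ᵥ n0 y = 1)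
    (htangent : ∀ α : Fin 2, adual α ⬝ᵥ n0 x = 0)
    (hdn : DifferentiableAt ℝ n0 x)
    (hdQ : DifferentiableAt ℝ Qe x)
    (d10 d20 : Fin 3 → ℝ)
    (hd10 : d10 = Q0.mulVec (Pi.single 0 1))
    (hd20 : d20 = Q0.mulVec (Pi.single 1 1))
    (c : Matrix (Fin 3) (Fin 3) ℝ) (hc : c = vecMulVec d10 d20 - vecMulVec d20 d10)
    (b : Matrix (Fin 3) (Fin 3) ℝ)
    (hbdef : b = -∑ α : Fin 2, vecMulVec (fderiv ℝ n0 x (Pi.single α 1)) (adual α))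
    (Ke : Matrix (Fin 3) (Fin 3) ℝ)
    (hKe : Ke = ∑ α : Fin 2,
        vecMulVec (axl ((Qe x)ᵀ * fderiv ℝ Qe x (Pi.single α 1))) (adual α))
    (d3f : (Fin 2 → ℝ) → (Fin 3 → ℝ)) (hd3f : d3f = fun y => (Qe y).mulVec (n0 y))
    (GradS : Matrix (Fin 3) (Fin 3) ℝ)
    (hGradS : GradS = ∑ α : Fin 2,
        vecMulVec (fderiv ℝ d3f x (Pi.single α 1)) (adual α)) :
    (Qe x)ᵀ * GradS = c * Ke - b :=
  stmt_19_general n0 Qe Q0 x adual hQe hQ0 hQ0det hQ0n hdn hdQ d10 d20 hd10 hd20 c hc b hbdef Ke hKe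
    d3f hd3f GradS hGradS
end
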